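/- arXiv:1907.09152 — 5 statements merged into one kernel-verified Lean document; each statement's English description precedes it below -/
import Mathlib

section
/- For positive integers s < t and any n ≥ 1, the Toeplitz graph on vertex set {1,…,n} with edge set { ij : |i−j| ∈ {s,t} } is 3-colorable (admits a proper vertex coloring with 3 colors). -/
/-- For 1 ≤ s < t and n ≥ 1, the Toeplitz graph on {1,...,n} with edges ij for
|i − j| ∈ {s, t} is 3-colorable. -/
theorem toeplitz_two_distances_three_colorable (s t n : ℕ)
    (hs : 0 < s) (hst : s < t) (hn : 1 ≤ n) :
    (SimpleGraph.fromRel (fun i j : Fin n =>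
      ((i : ℤ) - (j : ℤ)).natAbs = s ∨ ((i : ℤ) - (j : ℤ)).natAbs = t)).Colorable 3 := by
  classical
  set g := Nat.gcd s t with hg
  have hg0 : 0 < g := Nat.gcd_pos_of_pos_left _ hs
  have hgs : g ∣ s := Nat.gcd_dvd_left s t
  have hgt : g ∣ t := Nat.gcd_dvd_right s t
  set s' := s / g with hs'def
  set t' := t / g with ht'def
  set L := s' + t' with hLdef
  have hss : s = g * s' := (Nat.mul_div_cancel' hgs).symm
  have hts : t = g * t' := (Nat.mul_div_cancel' hgt).symm
  have hmL : s + t = g * L := by rw [hLdef, Nat.mul_add, ← hss, ← hts]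
  have hs'1 : 1 ≤ s' := Nat.div_pos (Nat.le_of_dvd hs hgs) hg0
  have hs't' : s' < t' := by
    have := hss ▸ hts ▸ hst
    exact Nat.lt_of_mul_lt_mul_left this
  have hL3 : 3 ≤ L := by omega
  haveI : NeZero L := ⟨by omega⟩
  haveI : Fact (1 < L) := ⟨by omega⟩
  have cop0 : Nat.Coprime s' t' := Nat.coprime_div_gcd_div_gcd hg0
  have cop : Nat.Coprime s' L := by
    rw [hLdef, add_comm]
    exact Nat.coprime_add_self_right.mpr cop0
  set u : ZMod L := (s' : ZMod L)⁻¹ with hu_def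
  have hu : (s' : ZMod L) * u = 1 := ZMod.coe_mul_inv_eq_one s' cop
  set k : ℕ → ZMod L := fun i => (((i % (s + t)) / g : ℕ) : ZMod L) * u with hk
  have hm0 : 0 < s + t := by omega
  -- main reduction: division of residues
  have hdiv : ∀ r d : ℕ, d ∣ g * L → r < s + t → d ≤ s + t →
      True := fun _ _ _ _ _ => trivial
  have stepgen : ∀ (i d : ℕ), d = g * (d / g) → d / g ≤ L → d < s + t →
      k (i + d) = k i + ((d / g : ℕ) : ZMod L) * u := by
    intro i d hdd hdL hdm'
    set r := i % (s + t) with hr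
    have hrlt : r < s + t := Nat.mod_lt _ hm0
    have h1 : (i + d) % (s + t) = (r + d) % (s + t) := by
      rw [Nat.add_mod, Nat.mod_eq_of_lt hdm']
    by_cases hcase : r + d < s + t
    · have h2 : (i + d) % (s + t) = r + d := by rw [h1, Nat.mod_eq_of_lt hcase]
      have h3 : (r + d) / g = r / g + d / g := by
        conv_lhs => rw [hdd]
        exact Nat.add_mul_div_left r _ hg0
      rw [hk]
      simp only
      rw [h2, h3]
      push_cast
      ring
    · push_neg at hcase
      have h2 : (i + d) % (s + t) = r + d - (s + t) := by
        rw [h1, Nat.mod_eq_sub_mod hcase, Nat.mod_eq_of_lt (by omega)]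
      set q := (r + d - (s + t)) / g with hq
      have h4 : (r + d - (s + t)) + g * L = r + d := by omega
      have h3 : (r + d) / g = r / g + d / g := by
        conv_lhs => rw [hdd]
        exact Nat.add_mul_div_left r _ hg0
      have h5 : q + L = r / g + d / g := by
        rw [← h3, ← h4, Nat.add_mul_div_left _ _ hg0]
      rw [hk]
      simp only
      rw [h2, ← hq]
      have h6 : ((q : ℕ) : ZMod L) = ((r / g : ℕ) : ZMod L) + ((d / g : ℕ) : ZMod L) := by
        have := congrArg (fun x : ℕ => (x : ZMod L)) h5
        push_cast at this
        rwa [ZMod.natCast_self, add_zero] at this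
      rw [h6]
      ring
  have stepS : ∀ i : ℕ, k (i + s) = k i + 1 := by
    intro i
    rw [stepgen i s (by rw [← hs'def, ← hss]) (by omega) (by omega), ← hs'def, hu]
  have stepT : ∀ i : ℕ, k (i + t) = k i - 1 := by
    intro i
    have h := stepgen i t (by rw [← ht'def, ← hts]) (by omega) (by omega)
    rw [h, ← ht'def]
    have hst0 : ((s' : ZMod L)) + ((t' : ZMod L)) = 0 := by
      have hL0 : ((L : ℕ) : ZMod L) = 0 := ZMod.natCast_self L
      rw [hLdef] at hL0
      push_cast at hL0
      exact hL0
    linear_combination u * hst0 - hu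
  -- the cycle coloring
  set ncol : ZMod L → ℕ := fun x => if x.val = L - 1 then 2 else x.val % 2 with hncol
  have ncol_lt : ∀ x, ncol x < 3 := by
    intro x; simp only [hncol]; split_ifs <;> omega
  have key : ∀ x : ZMod L, ncol (x + 1) ≠ ncol x := by
    intro x
    have hv : x.val < L := ZMod.val_lt x
    have hadd : (x + 1).val = (x.val + 1) % L := by
      rw [ZMod.val_add, ZMod.val_one]
    by_cases h1 : x.val = L - 1
    · have h2 : (x + 1).val = 0 := by
        rw [hadd, h1, Nat.sub_add_cancel (by omega), Nat.mod_self]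
      simp only [hncol, h1, h2]
      split_ifs <;> omega
    · have h2 : (x + 1).val = x.val + 1 := by
        rw [hadd, Nat.mod_eq_of_lt (by omega)]
      simp only [hncol, h2]
      split_ifs <;> omega
  refine ⟨SimpleGraph.Coloring.mk (fun v => (⟨ncol (k v.val), ncol_lt _⟩ : Fin 3)) ?_⟩
  intro a b hadj
  rw [SimpleGraph.fromRel_adj] at hadj
  obtain ⟨hne, habs⟩ := hadj
  have hcase : b.val = a.val + s ∨ a.val = b.val + s ∨ b.val = a.val + t ∨ a.val = b.val + t := by
    rcases habs with (h | h) | (h | h) <;> omega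
  simp only [ne_eq, Fin.mk.injEq]
  rcases hcase with h | h | h | h
  · rw [h, stepS]; exact fun he => key _ he.symm
  · rw [h, stepS]; exact fun he => key _ he
  · rw [h, stepT]
    intro he
    apply key (k a.val - 1)
    rw [sub_add_cancel, he]
  · rw [h, stepT]
    intro he
    apply key (k b.val - 1)
    rw [sub_add_cancel, ← he]
end

section
/- Every comparability graph (a graph admitting a transitive acyclic orientation) is permutationally representable, i.e., it can be represented by a word that is a concatenation of permutations of the entire vertex set. -/
/-!
Let `r` be a transitive orientation of `G`. For each incomparable pair `(a, b)`, the order `r`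
with `a < b` added is still a strict order, so it has a linear extension placing `a` before `b`.
These linear extensions, listed as permutations of the vertices, form a realizer of `r`: a
comparable pair appears in the same order in every one of them, an incomparable pair in both
orders. In a concatenation of permutations two letters alternate exactly when they appear in the
same order in every permutation, so the concatenation represents the comparability graph `G`.
-/

/-- Two letters `x` and `y` alternate in the word `w` if, after deleting all
letters other than `x` and `y`, consecutive letters always differ
(i.e. the restriction has the form `xyxy⋯` or `yxyx⋯`). -/
def Alternates {V : Type*} [DecidableEq V] (w : List V) (x y : V) : Prop :=
  (w.filter (fun z => z = x || z = y)).Chain' (· ≠ ·)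

/-- A word `w` represents the graph `G`: every vertex occurs in `w`, and two
distinct letters alternate in `w` iff they are adjacent in `G`. -/
def Represents {V : Type*} [DecidableEq V] (w : List V) (G : SimpleGraph V) : Prop :=
  (∀ v, v ∈ w) ∧ ∀ x y : V, x ≠ y → (Alternates w x y ↔ G.Adj x y)

/-- A graph is word-representable if some word represents it. -/
def WordRepresentable {V : Type*} [DecidableEq V] (G : SimpleGraph V) : Prop :=
  ∃ w : List V, Represents w G


namespace List

variable {α : Type*} {l : List α} {x y : α}

theorem pair_sublist_or_pair_sublist (hxy : x ≠ y) (hx : x ∈ l) (hy : y ∈ l) :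
    [x, y] <+ l ∨ [y, x] <+ l := by
  induction l with
  | nil => simp at hx
  | cons a t ih =>
    by_cases hax : a = x
    · subst hax
      exact .inl ((singleton_sublist.2 ((mem_cons.1 hy).resolve_left hxy.symm)).cons_cons a)
    by_cases hay : a = y
    · subst hay
      exact .inr ((singleton_sublist.2 ((mem_cons.1 hx).resolve_left hxy)).cons_cons a)
    exact (ih ((mem_cons.1 hx).resolve_left (Ne.symm hax))
      ((mem_cons.1 hy).resolve_left (Ne.symm hay))).imp (·.cons a) (·.cons a)

theorem Nodup.filter_eq_pair_iff (hl : l.Nodup) {p : α → Bool}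
    (hp : ∀ z, p z ↔ z = x ∨ z = y) : l.filter p = [x, y] ↔ [x, y] <+ l := by
  refine ⟨fun h => h ▸ filter_sublist, fun h => ?_⟩
  have hsub : [x, y] <+ l.filter p := by simpa [hp] using h.filter p
  have hbound : (l.filter p).length ≤ 2 := by
    refine ((hl.filter p).subperm (l₂ := [x, y]) fun z hz => ?_).length_le
    simpa [← hp] using (mem_filter.1 hz).2
  exact (hsub.eq_of_length_le hbound).symm

theorem Nodup.eq_of_pair_sublist_of_pair_sublist [DecidableEq α] (hl : l.Nodup)
    (hxy : [x, y] <+ l) (hyx : [y, x] <+ l) : x = y := by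
  have h₁ := (hl.filter_eq_pair_iff (p := fun z => z = x || z = y) (by simp)).2 hxy
  have h₂ := (hl.filter_eq_pair_iff (p := fun z => z = x || z = y) (by simp [or_comm])).2 hyx
  exact (cons_eq_cons.1 (h₁.symm.trans h₂)).1

theorem isChain_ne_flatten_iff (hxy : x ≠ y) :
    ∀ {L : List (List α)}, (∀ b ∈ L, b = [x, y] ∨ b = [y, x]) →
      (L.flatten.IsChain (· ≠ ·) ↔ (∀ b ∈ L, b = [x, y]) ∨ ∀ b ∈ L, b = [y, x])
  | [], _ => by simp
  | [b], hL => by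
    rcases hL b (by simp) with rfl | rfl <;> simp [hxy, hxy.symm]
  | b :: c :: L, hL => by
    have ih := isChain_ne_flatten_iff hxy (L := c :: L) fun d hd => hL d (mem_cons_of_mem b hd)
    rcases hL b (by simp) with rfl | rfl <;> rcases hL c (by simp) with rfl | rfl <;>
      simp_all [isChain_cons_cons, Ne.symm hxy]

end List

section Alternation

open List

variable {V : Type*} [DecidableEq V] {x y : V}

theorem alternates_flatten_iff {ps : List (List V)} (hxy : x ≠ y)
    (hps : ∀ p ∈ ps, p.Nodup ∧ x ∈ p ∧ y ∈ p) :
    Alternates ps.flatten x y ↔ (∀ p ∈ ps, [x, y] <+ p) ∨ ∀ p ∈ ps, [y, x] <+ p := by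
  have hxy_iff : ∀ p ∈ ps, p.filter (fun z => z = x || z = y) = [x, y] ↔ [x, y] <+ p :=
    fun p hp => (hps p hp).1.filter_eq_pair_iff (by simp)
  have hyx_iff : ∀ p ∈ ps, p.filter (fun z => z = x || z = y) = [y, x] ↔ [y, x] <+ p :=
    fun p hp => (hps p hp).1.filter_eq_pair_iff (by simp [or_comm])
  have hblocks : ∀ b ∈ ps.map (filter fun z => z = x || z = y), b = [x, y] ∨ b = [y, x] := by
    simp only [forall_mem_map]
    intro p hp
    rw [hxy_iff p hp, hyx_iff p hp]
    exact pair_sublist_or_pair_sublist hxy (hps p hp).2.1 (hps p hp).2.2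
  rw [Alternates, Chain', filter_flatten, isChain_ne_flatten_iff hxy hblocks]
  simp only [forall_mem_map]
  exact or_congr (forall₂_congr hxy_iff) (forall₂_congr hyx_iff)

end Alternation

section LinearExtension

open List

variable {V : Type*} {r : V → V → Prop}

def IsLinearExtension (r : V → V → Prop) (l : List V) : Prop :=
  l.Nodup ∧ (∀ v, v ∈ l) ∧ ∀ x y, r x y → [x, y] <+ l

theorem IsLinearExtension.mono {r' : V → V → Prop} {l : List V} (hr : r ≤ r')
    (hl : IsLinearExtension r' l) : IsLinearExtension r l :=
  ⟨hl.1, hl.2.1, fun x y hxy => hl.2.2 x y (hr x y hxy)⟩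

theorem exists_isLinearExtension [Fintype V] [IsStrictOrder V r] : ∃ l, IsLinearExtension r l := by
  classical
  let := partialOrderOfSO r
  obtain ⟨s, hs, hle⟩ := extend_partialOrder (α := V) (· ≤ ·)
  let l := Finset.univ.toList.insertionSort s
  have hperm : l ~ Finset.univ.toList := perm_insertionSort s _
  have hmem : ∀ v, v ∈ l := fun v => hperm.mem_iff.2 (by simp)
  have hsorted : l.Pairwise s := pairwise_insertionSort s _
  refine ⟨l, hperm.nodup_iff.2 (Finset.nodup_toList _), hmem, fun x y hxy => ?_⟩
  have hne : x ≠ y := ne_of_irrefl hxy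
  refine (pair_sublist_or_pair_sublist hne (hmem x) (hmem y)).resolve_right fun hyx => hne ?_
  exact antisymm (hle x y (Or.inr hxy)) (pairwise_pair.1 (hsorted.sublist hyx))

def extendByPair (r : V → V → Prop) (a b : V) (x y : V) : Prop :=
  r x y ∨ (x = a ∨ r x a) ∧ (b = y ∨ r b y)

theorem isStrictOrder_extendByPair [IsStrictOrder V r] {a b : V} (hab : a ≠ b) (hba : ¬ r b a) :
    IsStrictOrder V (extendByPair r a b) where
  irrefl x := by
    rintro (hxx | ⟨rfl | hxa, rfl | hbx⟩)
    · exact irrefl x hxx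
    · exact hab rfl
    · exact hba hbx
    · exact hba hxa
    · exact hba (_root_.trans hbx hxa)
  trans x y z := by
    rintro (hxy | ⟨hxa, hby⟩) (hyz | ⟨hya, hbz⟩)
    · exact .inl (_root_.trans hxy hyz)
    · refine .inr ⟨?_, hbz⟩
      rcases hya with rfl | hya
      · exact .inr hxy
      · exact .inr (_root_.trans hxy hya)
    · refine .inr ⟨hxa, ?_⟩
      rcases hby with rfl | hby
      · exact .inr hyz
      · exact .inr (_root_.trans hby hyz)
    · exact .inr ⟨hxa, hbz⟩

theorem exists_isLinearExtension_pair_sublist [Fintype V] [IsStrictOrder V r] {a b : V}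
    (hab : a ≠ b) (hba : ¬ r b a) : ∃ l, IsLinearExtension r l ∧ [a, b] <+ l := by
  have := isStrictOrder_extendByPair hab hba
  obtain ⟨l, hl⟩ := exists_isLinearExtension (r := extendByPair r a b)
  exact ⟨l, hl.mono fun x y => .inl, hl.2.2 a b (.inr ⟨.inl rfl, .inl rfl⟩)⟩

theorem exists_realizer [Fintype V] [IsStrictOrder V r] :
    ∃ ps : List (List V), ps ≠ [] ∧ (∀ p ∈ ps, IsLinearExtension r p) ∧
      ∀ x y, x ≠ y → ¬ r x y → ¬ r y x → ∃ p ∈ ps, [x, y] <+ p := by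
  obtain ⟨l₀, hl₀⟩ := exists_isLinearExtension (r := r)
  have hpair : ∀ q : V × V, ∃ l, IsLinearExtension r l ∧
      (q.1 ≠ q.2 → ¬ r q.2 q.1 → [q.1, q.2] <+ l) := by
    rintro ⟨a, b⟩
    by_cases h : a ≠ b ∧ ¬ r b a
    · obtain ⟨l, hl, hab⟩ := exists_isLinearExtension_pair_sublist h.1 h.2
      exact ⟨l, hl, fun _ _ => hab⟩
    · exact ⟨l₀, hl₀, fun hab hba => absurd ⟨hab, hba⟩ h⟩
  choose lin hlin hlin_pair using hpair
  refine ⟨l₀ :: Finset.univ.toList.map lin, cons_ne_nil _ _, ?_, ?_⟩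
  · intro p hp
    obtain rfl | ⟨q, -, rfl⟩ := (mem_cons.1 hp).imp_right mem_map.1
    exacts [hl₀, hlin q]
  · intro x y hxy _ hyx
    exact ⟨lin (x, y), by simp, hlin_pair (x, y) hxy hyx⟩

end LinearExtension

open List in
theorem represents_flatten_of_realizer {V : Type*} [DecidableEq V] {G : SimpleGraph V}
    {r : V → V → Prop} (horient : ∀ x y, G.Adj x y ↔ r x y ∨ r y x) {ps : List (List V)}
    (hne : ps ≠ []) (hlin : ∀ p ∈ ps, IsLinearExtension r p)
    (hreal : ∀ x y, x ≠ y → ¬ r x y → ¬ r y x → ∃ p ∈ ps, [x, y] <+ p) :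
    Represents ps.flatten G := by
  obtain ⟨p₀, hp₀⟩ := exists_mem_of_ne_nil ps hne
  refine ⟨fun v => mem_flatten.2 ⟨p₀, hp₀, (hlin p₀ hp₀).2.1 v⟩, fun x y hxy => ?_⟩
  rw [alternates_flatten_iff hxy fun p hp => ⟨(hlin p hp).1, (hlin p hp).2.1 x, (hlin p hp).2.1 y⟩,
    horient]
  constructor
  · rintro (hall | hall)
    all_goals
      by_contra! hinc
      obtain ⟨p, hp, hpxy⟩ := hreal x y hxy hinc.1 hinc.2
      obtain ⟨q, hq, hqyx⟩ := hreal y x hxy.symm hinc.2 hinc.1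
    · exact hxy ((hlin q hq).1.eq_of_pair_sublist_of_pair_sublist (hall q hq) hqyx)
    · exact hxy ((hlin p hp).1.eq_of_pair_sublist_of_pair_sublist hpxy (hall p hp))
  · rintro (hrxy | hryx)
    · exact .inl fun p hp => (hlin p hp).2.2 x y hrxy
    · exact .inr fun p hp => (hlin p hp).2.2 y x hryx

/-- Every comparability graph (one admitting a transitive, irreflexive — hence
acyclic — orientation) is permutationally representable: it is represented by a
concatenation of permutations of the whole vertex set. -/
theorem comparability_permutationally_representable {V : Type*} [Fintype V] [DecidableEq V]
    (G : SimpleGraph V) (r : V → V → Prop)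
    (htrans : Transitive r) (hirr : Irreflexive r)
    (horient : ∀ x y : V, G.Adj x y ↔ (r x y ∨ r y x)) :
    ∃ ps : List (List V),
      (∀ p ∈ ps, p.Nodup ∧ ∀ v : V, v ∈ p) ∧ Represents ps.flatten G := by
  have : IsStrictOrder V r := { irrefl := hirr, trans := fun _ _ _ => @htrans _ _ _ }
  obtain ⟨ps, hne, hlin, hreal⟩ := exists_realizer (r := r)
  exact ⟨ps, fun p hp => ⟨(hlin p hp).1, (hlin p hp).2.1⟩,
    represents_flatten_of_realizer horient hne hlin hreal⟩
end

section
/- Let m = 2k be an even positive integer. Then for every n, the Toeplitz graph on vertex set {1,…,n}, where distinct i < j are adjacent if and only if (j−i) mod 2k ∉ {k, 0}, is word-representable. -/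
section

variable {V α β : Type*}

theorem List.filter_eq_pair_of_pairwise_lt [DecidableEq V] [Preorder α] {key : V → α}
    {l : List V} (hl : l.Pairwise (key · < key ·)) {x y : V} (hx : x ∈ l) (hy : y ∈ l)
    (hxy : key x < key y) : l.filter (fun z => z = x || z = y) = [x, y] := by
  have hsub : (l.filter (fun z => z = x || z = y)).Pairwise (key · < key ·) :=
    hl.sublist List.filter_sublist
  refine List.Perm.eq_of_pairwise (fun a b _ _ hab hba => (lt_asymm hab hba).elim) hsub
    (by simpa using hxy) ?_
  refine (List.perm_ext_iff_of_nodup (hsub.imp fun h => ne_of_apply_ne key h.ne)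
    (by simpa using ne_of_apply_ne key hxy.ne)).2 fun z => ?_
  simp only [List.mem_filter, Bool.or_eq_true, decide_eq_true_eq, List.mem_cons,
    List.not_mem_nil, or_false]
  exact ⟨And.right, by rintro (rfl | rfl) <;> simp_all⟩

theorem List.filter_eq_pair_of_pairwise [DecidableEq V] [LinearOrder α] {key : V → α}
    (hkey : key.Injective) {l : List V} (hl : l.Pairwise (key · < key ·)) {x y : V}
    (hx : x ∈ l) (hy : y ∈ l) (hxy : x ≠ y) :
    l.filter (fun z => z = x || z = y) = if key x < key y then [x, y] else [y, x] := by
  split_ifs with h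
  · exact filter_eq_pair_of_pairwise_lt hl hx hy h
  · simp_rw [Bool.or_comm (decide (_ = x))]
    exact filter_eq_pair_of_pairwise_lt hl hy hx ((not_lt.1 h).lt_of_ne (hkey.ne hxy.symm))

theorem alternates_append_of_pairwise [DecidableEq V] [LinearOrder α] [LinearOrder β]
    {key₁ : V → α} {key₂ : V → β} (hkey₁ : key₁.Injective) (hkey₂ : key₂.Injective)
    {l₁ l₂ : List V} (hl₁ : l₁.Pairwise (key₁ · < key₁ ·)) (hl₂ : l₂.Pairwise (key₂ · < key₂ ·))
    {x y : V} (hx₁ : x ∈ l₁) (hy₁ : y ∈ l₁) (hx₂ : x ∈ l₂) (hy₂ : y ∈ l₂) (hxy : x ≠ y) :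
    Alternates (l₁ ++ l₂) x y ↔ (key₁ x < key₁ y ↔ key₂ x < key₂ y) := by
  change ((l₁ ++ l₂).filter _).IsChain (· ≠ ·) ↔ _
  rw [List.filter_append, List.filter_eq_pair_of_pairwise hkey₁ hl₁ hx₁ hy₁ hxy,
    List.filter_eq_pair_of_pairwise hkey₂ hl₂ hx₂ hy₂ hxy]
  rcases lt_or_gt_of_ne (hkey₁.ne hxy) with h₁ | h₁ <;>
  rcases lt_or_gt_of_ne (hkey₂.ne hxy) with h₂ | h₂ <;>
  simp [h₁, h₂, h₁.not_gt, h₂.not_gt, hxy, Ne.symm hxy]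

theorem List.exists_pairwise_lt_of_injective [Fintype V] [LinearOrder α] {key : V → α}
    (hkey : key.Injective) : ∃ l : List V, (∀ v, v ∈ l) ∧ l.Pairwise (key · < key ·) :=
  letI : LinearOrder V := LinearOrder.lift' key hkey
  ⟨Finset.univ.sort (· ≤ ·), by simp, (Finset.sortedLT_sort _).pairwise⟩

theorem wordRepresentable_of_adj_iff_lt_iff_lt [DecidableEq V] [Fintype V] [LinearOrder α]
    [LinearOrder β] {G : SimpleGraph V} {key₁ : V → α} {key₂ : V → β}
    (hkey₁ : key₁.Injective) (hkey₂ : key₂.Injective)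
    (hG : ∀ x y, x ≠ y → (G.Adj x y ↔ (key₁ x < key₁ y ↔ key₂ x < key₂ y))) :
    WordRepresentable G := by
  obtain ⟨l₁, hmem₁, hl₁⟩ := List.exists_pairwise_lt_of_injective hkey₁
  obtain ⟨l₂, hmem₂, hl₂⟩ := List.exists_pairwise_lt_of_injective hkey₂
  refine ⟨l₁ ++ l₂, fun v => List.mem_append_left _ (hmem₁ v), fun x y hxy => ?_⟩
  rw [hG x y hxy]
  exact alternates_append_of_pairwise hkey₁ hkey₂ hl₁ hl₂ (hmem₁ x) (hmem₁ y) (hmem₂ x)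
    (hmem₂ y) hxy

theorem wordRepresentable_of_adj_iff_ne [DecidableEq V] [Fintype V] [LinearOrder V]
    [LinearOrder α] {G : SimpleGraph V} (f : V → α) (hG : ∀ x y, G.Adj x y ↔ f x ≠ f y) :
    WordRepresentable G := by
  refine wordRepresentable_of_adj_iff_lt_iff_lt (key₁ := fun v => toLex (f v, v))
    (key₂ := fun v => toLex (f v, OrderDual.toDual v))
    (fun _ _ h => (Prod.mk.inj (toLex.injective h)).2)
    (fun _ _ h => OrderDual.toDual.injective (Prod.mk.inj (toLex.injective h)).2)
    fun x y hxy => ?_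
  simp only [hG, Prod.Lex.toLex_lt_toLex, OrderDual.toDual_lt_toDual]
  rcases lt_trichotomy (f x) (f y) with h | h | h
  · simp [h, h.ne]
  · rcases hxy.lt_or_gt with h' | h' <;> simp [h, h', h'.not_gt]
  · simp [h.ne', h.not_gt]

end

theorem Nat.mod_two_mul_eq_zero_or_eq_iff_dvd (n k : ℕ) :
    n % (2 * k) = 0 ∨ n % (2 * k) = k ↔ k ∣ n := by
  rw [← Nat.dvd_mod_iff (Dvd.intro_left 2 rfl)]
  rcases k.eq_zero_or_pos with rfl | hk
  · simp
  have hlt : n % (2 * k) < 2 * k := Nat.mod_lt _ (by omega)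
  refine ⟨by rintro (h | h) <;> simp [h], fun ⟨c, hc⟩ => ?_⟩
  have hc2 : c < 2 := by nlinarith
  interval_cases c <;> simp [hc]

theorem Nat.sub_mod_two_mul_ne_and_ne_iff {a b : ℕ} (k : ℕ) (hab : a ≤ b) :
    (b - a) % (2 * k) ≠ k ∧ (b - a) % (2 * k) ≠ 0 ↔ a % k ≠ b % k := by
  rw [← not_or, or_comm, Nat.mod_two_mul_eq_zero_or_eq_iff_dvd, ← Nat.modEq_iff_dvd' hab]
  rfl

theorem toeplitz_gap_half_word_representable_general (k n : ℕ) :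
    WordRepresentable (SimpleGraph.fromRel (fun i j : Fin n =>
      (i : ℕ) < (j : ℕ) ∧ ((j : ℕ) - (i : ℕ)) % (2 * k) ≠ k ∧
        ((j : ℕ) - (i : ℕ)) % (2 * k) ≠ 0)) := by
  refine wordRepresentable_of_adj_iff_ne (fun i : Fin n => (i : ℕ) % k) fun x y => ?_
  rw [SimpleGraph.fromRel_adj]
  rcases lt_trichotomy (x : ℕ) y with h | h | h
  · simp [h, h.not_gt, Fin.ne_of_lt h, Nat.sub_mod_two_mul_ne_and_ne_iff k h.le]
  · simp [Fin.ext h]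
  · simp [h, h.not_gt, Fin.ne_of_gt h,
      (Nat.sub_mod_two_mul_ne_and_ne_iff k h.le).trans ne_comm]

/-- For m = 2k even, the Toeplitz graph G_n(1^(k-1) 0 1^k), where i < j are
adjacent iff (j − i) % (2k) ∉ {k, 0}, is word-representable. -/
theorem toeplitz_gap_half_word_representable (k n : ℕ) (hk : 0 < k) :
    WordRepresentable (SimpleGraph.fromRel (fun i j : Fin n =>
      (i : ℕ) < (j : ℕ) ∧ ((j : ℕ) - (i : ℕ)) % (2 * k) ≠ k ∧
        ((j : ℕ) - (i : ℕ)) % (2 * k) ≠ 0)) :=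
  toeplitz_gap_half_word_representable_general k n
end

section
/- Let a₁,…,a_m ∈ {0,1} and let d be a positive divisor of m. If the Toeplitz graph G_n(a₁⋯a_m) is word-representable, then the Toeplitz graph G_{⌊n/d⌋}(a_d a_{2d} ⋯ a_m) is word-representable. -/
/-- The representative of `d` modulo `m` taken in `{1, …, m}`. -/
def repMod (d m : ℕ) : ℕ := if d % m = 0 then m else d % m

/-- The Toeplitz graph `G_n(a₁ ⋯ a_m)` on vertex set `{1,…,n}` (encoded as `Fin n`,
with `v : Fin n` standing for the label `v+1`): vertices `i < j` are adjacent iff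
`a r = true` where `r ∈ {1,…,m}` is congruent to `j - i` modulo `m`. -/
def toeplitzGraph (n m : ℕ) (a : ℕ → Bool) : SimpleGraph (Fin n) :=
  SimpleGraph.fromRel (fun i j => (i : ℕ) < (j : ℕ) ∧ a (repMod ((j : ℕ) - (i : ℕ)) m) = true)

open Function

section Hereditary

variable {V W : Type*} [DecidableEq V] [DecidableEq W]

lemma map_filter_filterMap_partialInv {f : W → V} (hf : Injective f) (x y : W) (w : List V) :
    ((w.filterMap (partialInv f)).filter (fun z => z = x || z = y)).map f
      = w.filter (fun v => v = f x || v = f y) := by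
  rw [List.filter_filterMap, List.map_filterMap, ← List.filterMap_eq_filter]
  congr 1
  funext v
  cases hv : partialInv f v with
  | none =>
    have hx : v ≠ f x := by rintro rfl; simp [partialInv_left hf] at hv
    have hy : v ≠ f y := by rintro rfl; simp [partialInv_left hf] at hv
    simp [Option.guard, hx, hy]
  | some z =>
    obtain rfl : f z = v := (hf.isPartialInv z v).1 hv
    simp [Option.guard, Option.filter, hf.eq_iff]

lemma alternates_filterMap_partialInv {f : W → V} (hf : Injective f) (w : List V) (x y : W) :
    Alternates (w.filterMap (partialInv f)) x y ↔ Alternates w (f x) (f y) := by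
  unfold Alternates
  rw [← map_filter_filterMap_partialInv hf, List.Chain', List.Chain', List.isChain_map]
  simp only [hf.ne_iff]

theorem WordRepresentable.of_embedding {G : SimpleGraph V} {H : SimpleGraph W} (e : H ↪g G)
    (hG : WordRepresentable G) : WordRepresentable H := by
  obtain ⟨w, hw_mem, hw_alt⟩ := hG
  refine ⟨w.filterMap (partialInv e), fun v => ?_, fun x y hxy => ?_⟩
  · exact List.mem_filterMap.2 ⟨e v, hw_mem _, partialInv_left e.injective v⟩
  · rw [alternates_filterMap_partialInv e.injective, hw_alt _ _ (e.injective.ne hxy),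
      e.map_adj_iff]

end Hereditary

lemma repMod_mul_right (k q d : ℕ) : repMod (k * d) (q * d) = repMod k q * d := by
  rcases Nat.eq_zero_or_pos d with rfl | hd
  · simp [repMod]
  · simp [repMod, Nat.mul_mod_mul_right, hd.ne']

lemma toeplitzGraph_adj {n m : ℕ} {a : ℕ → Bool} {i j : Fin n} :
    (toeplitzGraph n m a).Adj i j ↔ i ≠ j ∧ a (repMod (Nat.dist i j) m) = true := by
  rw [toeplitzGraph, SimpleGraph.fromRel_adj, Fin.ne_iff_vne]
  rcases lt_trichotomy (i : ℕ) j with hij | hij | hij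
  · simp [hij, hij.ne, hij.not_gt, Nat.dist_eq_sub_of_le hij.le]
  · simp [hij]
  · simp [hij, hij.ne', hij.not_gt, Nat.dist_comm (i : ℕ), Nat.dist_eq_sub_of_le hij.le]

section Multiples

variable {n d : ℕ}

lemma succ_mul_sub_one_lt (hd : 0 < d) {x : ℕ} (hx : x < n / d) : (x + 1) * d - 1 < n := by
  have h : (x + 1) * d ≤ n := (Nat.le_div_iff_mul_le hd).1 hx
  have : d ≤ (x + 1) * d := Nat.le_mul_of_pos_left d (Nat.succ_pos x)
  omega

/-- Sends the vertex of label `x + 1` to the vertex of label `(x + 1) * d`. -/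
def multipleVertex (hd : 0 < d) (x : Fin (n / d)) : Fin n :=
  ⟨(x + 1) * d - 1, succ_mul_sub_one_lt hd x.2⟩

lemma multipleVertex_succ (hd : 0 < d) (x : Fin (n / d)) :
    (multipleVertex hd x : ℕ) + 1 = (x + 1) * d := by
  have : d ≤ (x + 1) * d := Nat.le_mul_of_pos_left d (Nat.succ_pos x)
  simp only [multipleVertex]
  omega

lemma multipleVertex_injective (hd : 0 < d) : Injective (multipleVertex hd (n := n)) := by
  intro x y hxy
  have := congrArg (fun v : Fin n => (v : ℕ) + 1) hxy
  simp only [multipleVertex_succ, Nat.mul_left_inj hd.ne'] at this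
  exact Fin.ext (by omega)

lemma dist_multipleVertex (hd : 0 < d) (x y : Fin (n / d)) :
    Nat.dist (multipleVertex hd x) (multipleVertex hd y) = Nat.dist x y * d := by
  rw [← Nat.dist_add_add_right _ 1, multipleVertex_succ, multipleVertex_succ, Nat.dist_mul_right,
    Nat.dist_add_add_right]

def toeplitzGraphMultiplesEmbedding (hd : 0 < d) (q : ℕ) (a : ℕ → Bool) :
    toeplitzGraph (n / d) q (fun r => a (r * d)) ↪g toeplitzGraph n (q * d) a where
  toFun := multipleVertex hd
  inj' := multipleVertex_injective hd
  map_rel_iff' {x y} := by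
    simp only [Embedding.coeFn_mk, toeplitzGraph_adj, dist_multipleVertex, repMod_mul_right,
      (multipleVertex_injective hd).ne_iff]

end Multiples

theorem toeplitz_decomposition_word_representable_general (m d n : ℕ) (a : ℕ → Bool)
    (hd : 0 < d) (hdm : d ∣ m)
    (h : WordRepresentable (toeplitzGraph n m a)) :
    WordRepresentable (toeplitzGraph (n / d) (m / d) (fun r => a (r * d))) := by
  rw [← Nat.div_mul_cancel hdm] at h
  exact h.of_embedding (toeplitzGraphMultiplesEmbedding hd (m / d) a)

/-- If the Toeplitz graph G_n(a₁ ⋯ a_m) is word-representable, then for every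
positive divisor d of m the Toeplitz graph G_{⌊n/d⌋}(a_d a_{2d} ⋯ a_m) is also
word-representable. -/
theorem toeplitz_decomposition_word_representable (m d n : ℕ) (a : ℕ → Bool)
    (hm : 0 < m) (hd : 0 < d) (hdm : d ∣ m)
    (h : WordRepresentable (toeplitzGraph n m a)) :
    WordRepresentable (toeplitzGraph (n / d) (m / d) (fun r => a (r * d))) :=
  toeplitz_decomposition_word_representable_general m d n a hd hdm h
end

section
/- Let P(z) be a polynomial of degree k−1 with 0/1 coefficients and let m ≥ k. Then the Riordan graph G_n(P(z), z^m) — the graph on {1,…,n} whose adjacency below the diagonal is given by the binary Riordan matrix B(zP(z), z^m) — is a forest for every n, and hence is word-representable. -/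
/-!
A vertex `i` of `G_n(P(z), z^m)` is adjacent to a smaller vertex `j` only if `z^(i - 1 - m j)`
occurs in `P`, so `0 ≤ i - 1 - m j < deg P + 1 ≤ m`, which forces `j = ⌊(i - 1) / m⌋`: every
vertex has at most one smaller neighbour. In a cycle the largest vertex would have two, so the
graph is a forest. Such a graph is also represented by a word in which every letter occurs
twice: add the vertices in increasing order, writing `y y` in front for an isolated new vertex
`y`, and replacing the first occurrence of its neighbour `x` by `y x y` otherwise.
-/

open SimpleGraph

variable {V : Type*}

section Words

variable [DecidableEq V]

theorem alternates_comm {w : List V} {x y : V} : Alternates w x y ↔ Alternates w y x := by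
  unfold Alternates
  rw [List.filter_congr fun z _ => Bool.or_comm ..]

theorem alternates_filter_ne_iff {w : List V} {x y z : V} (hx : x ≠ z) (hy : y ≠ z) :
    Alternates (w.filter (· ≠ z)) x y ↔ Alternates w x y := by
  unfold Alternates
  rw [List.filter_filter, List.filter_congr]
  intro v _
  by_cases hvx : v = x <;> by_cases hvy : v = y <;> simp_all

theorem not_alternates_append_cons_append_cons {x y : V} (A B C : List V)
    (hB : ∀ v ∈ B, v ≠ x ∧ v ≠ y) : ¬ Alternates (A ++ y :: (B ++ y :: C)) x y := by
  have hfB : B.filter (fun z => z = x || z = y) = [] := by simpa using hB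
  intro h
  simp only [Alternates, List.filter_append, List.filter_cons, hfB] at h
  simpa using (List.isChain_append.mp h).2.1

def IsTwoUniformRep (w : List V) (G : SimpleGraph V) : Prop :=
  (∀ v ∈ w, w.count v = 2) ∧ ∀ x ∈ w, ∀ y ∈ w, x ≠ y → (Alternates w x y ↔ G.Adj x y)

namespace IsTwoUniformRep

variable {G : SimpleGraph V} {w : List V} {y : V}

theorem of_filter_ne {w' : List V} (hw : IsTwoUniformRep w G) (hfilter : w'.filter (· ≠ y) = w)
    (hcount : w'.count y = 2) (hadj : ∀ v ∈ w, Alternates w' v y ↔ G.Adj v y) :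
    IsTwoUniformRep w' G := by
  have hmem : ∀ v ≠ y, v ∈ w' → v ∈ w := fun v hv hv' => by
    rw [← hfilter]
    simpa [hv] using hv'
  refine ⟨fun v hv => ?_, fun a ha b hb hab => ?_⟩
  · by_cases hvy : v = y
    · rwa [hvy]
    · rw [← hw.1 v (hmem v hvy hv), ← hfilter, List.count_filter (by simpa using hvy)]
  · by_cases hay : a = y
    · subst hay
      have hby : b ≠ a := Ne.symm hab
      rw [alternates_comm, G.adj_comm]
      exact hadj b (hmem b hby hb)
    by_cases hby : b = y
    · subst hby
      exact hadj a (hmem a hay ha)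
    rw [← alternates_filter_ne_iff hay hby, hfilter]
    exact hw.2 a (hmem a hay ha) b (hmem b hby hb) hab

theorem cons_cons (hw : IsTwoUniformRep w G) (hy : y ∉ w) (hiso : ∀ v ∈ w, ¬ G.Adj v y) :
    IsTwoUniformRep (y :: y :: w) G := by
  refine hw.of_filter_ne ?_ ?_ fun v hv => iff_of_false ?_ (hiso v hv)
  · simpa [List.filter_eq_self] using fun v hv (hvy : v = y) => hy (hvy ▸ hv)
  · simp [List.count_eq_zero.2 hy]
  · exact not_alternates_append_cons_append_cons [] [] w (by simp)

theorem insert_pendant {x : V} {A B : List V} (hw : IsTwoUniformRep (A ++ x :: B) G)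
    (hxA : x ∉ A) (hy : y ∉ A ++ x :: B) (hnbr : ∀ v ∈ A ++ x :: B, G.Adj v y ↔ v = x) :
    IsTwoUniformRep (A ++ y :: x :: y :: B) G := by
  have hyA : y ∉ A := fun h => hy (by simp [h])
  have hyB : y ∉ B := fun h => hy (by simp [h])
  have hxy : x ≠ y := fun h => hy (by simp [h])
  have hxB : B.count x = 1 := by
    simpa [List.count_append, List.count_eq_zero.2 hxA] using hw.1 x (by simp)
  refine hw.of_filter_ne (y := y) ?_ ?_ fun v hv => ?_
  · simp only [List.filter_append, List.filter_cons, List.filter_eq_self.2 fun v hv =>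
      decide_eq_true (ne_of_mem_of_not_mem hv hyA), List.filter_eq_self.2 fun v hv =>
      decide_eq_true (ne_of_mem_of_not_mem hv hyB)]
    simp [hxy]
  · simp [List.count_append, hxy, List.count_eq_zero.2 hyA, List.count_eq_zero.2 hyB]
  rw [hnbr v hv]
  by_cases hvx : v = x
  · subst hvx
    have hfA : A.filter (fun z => z = v || z = y) = [] := by
      simpa using fun z hz => ⟨ne_of_mem_of_not_mem hz hxA, ne_of_mem_of_not_mem hz hyA⟩
    have hfB : B.filter (fun z => z = v || z = y) = [v] := by
      rw [List.filter_congr (q := (· = v)) fun z hz => by simp [ne_of_mem_of_not_mem hz hyB],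
        List.filter_eq, hxB, List.replicate_one]
    simp only [Alternates, List.filter_append, List.filter_cons, hfA, hfB, iff_true]
    show List.IsChain _ _
    simp [hxy, hxy.symm]
  · exact iff_of_false
      (not_alternates_append_cons_append_cons A [x] B (by simpa using ⟨Ne.symm hvx, hxy⟩)) hvx

theorem exists_insert (hw : IsTwoUniformRep w G) (hy : y ∉ w)
    (hnbr : ∀ a ∈ w, ∀ b ∈ w, G.Adj a y → G.Adj b y → a = b) :
    ∃ w', (∀ v, v ∈ w' ↔ v = y ∨ v ∈ w) ∧ IsTwoUniformRep w' G := by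
  by_cases hx : ∃ x ∈ w, G.Adj x y
  · obtain ⟨x, hxw, hxy⟩ := hx
    obtain ⟨A, B, hxA, rfl, -⟩ := List.exists_erase_eq hxw
    refine ⟨A ++ y :: x :: y :: B, fun v => ?_, hw.insert_pendant hxA hy fun v hv =>
      ⟨fun hvy => hnbr v hv x hxw hvy hxy, fun hvx => hvx ▸ hxy⟩⟩
    simp only [List.mem_append, List.mem_cons]
    tauto
  · push Not at hx
    exact ⟨y :: y :: w, by simp, hw.cons_cons hy hx⟩

end IsTwoUniformRep

end Words

def LowerNeighborsSubsingleton [LT V] (G : SimpleGraph V) : Prop :=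
  ∀ a, {b | G.Adj a b ∧ b < a}.Subsingleton

namespace LowerNeighborsSubsingleton

variable [LinearOrder V] {G : SimpleGraph V}

theorem isAcyclic (h : LowerNeighborsSubsingleton G) : G.IsAcyclic := by
  intro v c hc
  obtain ⟨u, hu, hmax⟩ := c.support.toFinset.exists_max_image id ⟨v, by simp⟩
  rw [List.mem_toFinset] at hu
  obtain ⟨b, b', hbb', hnbrs⟩ := Set.ncard_eq_two.1 (hc.ncard_neighborSet_toSubgraph_eq_two hu)
  have hlower : ∀ z ∈ c.toSubgraph.neighborSet u, G.Adj u z ∧ z < u := fun z hz =>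
    have hadj := c.toSubgraph.adj_sub hz
    ⟨hadj, (hmax z (List.mem_toFinset.2 (c.mem_support_of_adj_toSubgraph hz.symm))).lt_of_ne
      hadj.ne'⟩
  exact hbb' (h u (hlower b (by simp [hnbrs])) (hlower b' (by simp [hnbrs])))

theorem wordRepresentable [Fintype V] (h : LowerNeighborsSubsingleton G) :
    WordRepresentable G := by
  suffices ∀ s : Finset V, ∃ w, (∀ v, v ∈ w ↔ v ∈ s) ∧ IsTwoUniformRep w G by
    obtain ⟨w, hmem, hw⟩ := this Finset.univ
    have hall : ∀ v, v ∈ w := fun v => (hmem v).2 (Finset.mem_univ v)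
    exact ⟨w, hall, fun x y hxy => hw.2 x (hall x) y (hall y) hxy⟩
  intro s
  induction s using Finset.induction_on_max with
  | empty => exact ⟨[], by simp, by simp [IsTwoUniformRep]⟩
  | insert a s hlt ih =>
    obtain ⟨w, hmem, hw⟩ := ih
    have hltw : ∀ b ∈ w, b < a := fun b hb => hlt b ((hmem b).1 hb)
    obtain ⟨w', hmem', hw'⟩ := hw.exists_insert (fun ha => (hltw a ha).false)
      fun b hb c hc hba hca => h a ⟨hba.symm, hltw b hb⟩ ⟨hca.symm, hltw c hc⟩
    exact ⟨w', by simp [hmem', hmem], hw'⟩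

end LowerNeighborsSubsingleton

/-- The Riordan graph `G_n(P(z), z^m)`, where `p r` is the coefficient of `z^r` in `P` and the
vertices `1, …, n` are shifted to `0, …, n - 1`. -/
def riordanGraph (m : ℕ) (p : ℕ → Bool) (n : ℕ) : SimpleGraph (Fin n) :=
  SimpleGraph.fromRel fun i j : Fin n =>
    (j : ℕ) < (i : ℕ) ∧ m * (j : ℕ) + 1 ≤ (i : ℕ) ∧ p ((i : ℕ) - 1 - m * (j : ℕ)) = true

theorem eq_div_of_coeff_eq_true {k m i j : ℕ} {p : ℕ → Bool} (hkm : k ≤ m)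
    (hp : ∀ r, k ≤ r → p r = false) (hji : m * j + 1 ≤ i) (hcoeff : p (i - 1 - m * j) = true) :
    j = (i - 1) / m := by
  have hlt : i - 1 - m * j < m := by
    by_contra! hge
    simp [hp _ (hkm.trans hge)] at hcoeff
  refine (Nat.div_eq_of_lt_le ?_ ?_).symm
  · rw [Nat.mul_comm]
    omega
  · rw [Nat.mul_comm, Nat.mul_succ]
    omega

theorem riordanGraph_lowerNeighborsSubsingleton {k m n : ℕ} {p : ℕ → Bool} (hkm : k ≤ m)
    (hp : ∀ r, k ≤ r → p r = false) : LowerNeighborsSubsingleton (riordanGraph m p n) := by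
  have hlower : ∀ i j : Fin n, (riordanGraph m p n).Adj i j → j < i → (j : ℕ) = (i - 1) / m := by
    intro i j hij hji
    obtain ⟨-, ⟨-, hle, hcoeff⟩ | ⟨hij', -⟩⟩ := hij
    · exact eq_div_of_coeff_eq_true hkm hp hle hcoeff
    · exact absurd hji hij'.asymm
  exact fun i j ⟨hij, hji⟩ j' ⟨hij', hj'i⟩ => Fin.ext ((hlower i j hij hji).trans
    (hlower i j' hij' hj'i).symm)

theorem riordan_polynomial_zm_forest_word_representable_general (k m n : ℕ)
    (p : ℕ → Bool) (hkm : k ≤ m)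
    (hp : ∀ r, k ≤ r → p r = false) :
    (SimpleGraph.fromRel (fun i j : Fin n =>
        (j : ℕ) < (i : ℕ) ∧ m * (j : ℕ) + 1 ≤ (i : ℕ) ∧
          p ((i : ℕ) - 1 - m * (j : ℕ)) = true)).IsAcyclic ∧
    WordRepresentable (SimpleGraph.fromRel (fun i j : Fin n =>
        (j : ℕ) < (i : ℕ) ∧ m * (j : ℕ) + 1 ≤ (i : ℕ) ∧
          p ((i : ℕ) - 1 - m * (j : ℕ)) = true)) :=
  have h := riordanGraph_lowerNeighborsSubsingleton (n := n) (p := p) hkm hp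
  ⟨h.isAcyclic, h.wordRepresentable⟩

/-- The Riordan graph G_n(P(z), z^m) with P a 0/1-polynomial of degree k−1 and
m ≥ k: vertices (0-indexed as Fin n) j < i are adjacent iff m·j + 1 ≤ i and the
coefficient p (i − 1 − m·j) of P is 1.  Every such graph is a forest, hence
word-representable. -/
theorem riordan_polynomial_zm_forest_word_representable (k m n : ℕ)
    (p : ℕ → Bool) (hk : 0 < k) (hkm : k ≤ m)
    (hdeg : p (k - 1) = true) (hp : ∀ r, k ≤ r → p r = false) :
    (SimpleGraph.fromRel (fun i j : Fin n =>
        (j : ℕ) < (i : ℕ) ∧ m * (j : ℕ) + 1 ≤ (i : ℕ) ∧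
          p ((i : ℕ) - 1 - m * (j : ℕ)) = true)).IsAcyclic ∧
    WordRepresentable (SimpleGraph.fromRel (fun i j : Fin n =>
        (j : ℕ) < (i : ℕ) ∧ m * (j : ℕ) + 1 ≤ (i : ℕ) ∧
          p ((i : ℕ) - 1 - m * (j : ℕ)) = true)) :=
  riordan_polynomial_zm_forest_word_representable_general k m n p hkm hp
end
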